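/- arXiv:2204.13143 — 6 statements merged into one kernel-verified Lean document; each statement's English description precedes it below -/
import Mathlib

section
/- Let P be an x-monotone simple polygon, g a point in P, and f a point in P with g.x < f.x such that the segment from g to f lies inside P. Then for any point p on the ceiling (upper boundary chain) of P with g.x < p.x < f.x, the floor (lower boundary chain) of P does not intersect the open segment from g to p; i.e., the floor cannot block g from seeing p. -/
/-- In an x-monotone polygon (region between floor `φ` and ceiling `ψ` over `[a,b]`),
if `g` sees `f` (segment inside `P`) with `g.x < f.x`, then for any ceiling point
`p = (t, ψ t)` with `g.x < t < f.x`, the floor does not intersect the open segment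
from `g` to `p`. -/
theorem floor_cannot_block_between
    (a b : ℝ) (φ ψ : ℝ → ℝ)
    (hφ : ContinuousOn φ (Set.Icc a b)) (hψ : ContinuousOn ψ (Set.Icc a b))
    (hφψ : ∀ x ∈ Set.Icc a b, φ x ≤ ψ x)
    (P : Set (ℝ × ℝ))
    (hP : P = {p : ℝ × ℝ | p.1 ∈ Set.Icc a b ∧ φ p.1 ≤ p.2 ∧ p.2 ≤ ψ p.1})
    (g f : ℝ × ℝ) (hg : g ∈ P) (hf : f ∈ P) (hgf : g.1 < f.1)
    (hsee : segment ℝ g f ⊆ P)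
    (t : ℝ) (ht : g.1 < t) (ht' : t < f.1) :
    ∀ s ∈ openSegment ℝ g (t, ψ t), φ s.1 ≤ s.2 := by
  rintro s ⟨u, v, hu, hv, huv, rfl⟩
  -- point on segment gf with x-coordinate t
  set μ : ℝ := (t - g.1) / (f.1 - g.1) with hμdef
  have hden : 0 < f.1 - g.1 := by linarith
  have hμ0 : 0 ≤ μ := div_nonneg (by linarith) (by linarith)
  have hμ1 : μ ≤ 1 := by
    rw [hμdef, div_le_one hden]; linarith
  set r : ℝ × ℝ := (1 - μ) • g + μ • f with hrdef
  have hrseg : r ∈ segment ℝ g f := ⟨1 - μ, μ, by linarith, hμ0, by ring, rfl⟩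
  have hrP : r ∈ P := hsee hrseg
  have hr1 : r.1 = t := by
    have : r.1 = (1 - μ) * g.1 + μ * f.1 := rfl
    rw [this, hμdef]
    field_simp
    ring
  have hr2 : r.2 ≤ ψ t := by
    rw [hP] at hrP
    have := hrP.2.2
    rwa [hr1] at this
  -- q : corresponding point on segment g r  (subset of segment g f)
  set q : ℝ × ℝ := u • g + v • r with hqdef
  have hqseg : q ∈ segment ℝ g f := by
    refine ⟨u + v * (1 - μ), v * μ, ?_, ?_, ?_, ?_⟩
    · nlinarith
    · positivity
    · nlinarith
    · simp only [hqdef, hrdef, smul_add, smul_smul, add_smul]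
      abel
  have hqP : q ∈ P := hsee hqseg
  have hq1 : q.1 = (u • g + v • ((t : ℝ), ψ t)).1 := by
    simp only [hqdef, Prod.fst_add, Prod.smul_fst, smul_eq_mul, hr1]
  have hq2 : q.2 ≤ (u • g + v • ((t : ℝ), ψ t)).2 := by
    simp only [hqdef, Prod.snd_add, Prod.smul_snd, smul_eq_mul]
    nlinarith [hr2]
  rw [hP] at hqP
  calc φ (u • g + v • ((t : ℝ), ψ t)).1 = φ q.1 := by rw [hq1]
    _ ≤ q.2 := hqP.2.1
    _ ≤ _ := hq2
end

section
/- Let P be an x-monotone simple polygon modeled as the region {(x,y) : x ∈ [a,b], φ(x) ≤ y ≤ ψ(x)} for continuous floor function φ and ceiling function ψ. If a point g ∈ P is blocked by the floor from seeing a ceiling point p (with g.x < p.x), i.e., the segment gp exits P through the floor, then g sees no point of P with x-coordinate strictly greater than p.x. -/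
/-- If the floor blocks `g` from a ceiling point `p` (some point of the open segment
`g p` lies strictly below the floor), then `g` sees no point of `P` strictly to the
right of `p`. -/
theorem blocked_by_floor_sees_nothing_right
    (a b : ℝ) (φ ψ : ℝ → ℝ)
    (hφ : ContinuousOn φ (Set.Icc a b)) (hψ : ContinuousOn ψ (Set.Icc a b))
    (hφψ : ∀ x ∈ Set.Icc a b, φ x ≤ ψ x)
    (P : Set (ℝ × ℝ))
    (hP : P = {p : ℝ × ℝ | p.1 ∈ Set.Icc a b ∧ φ p.1 ≤ p.2 ∧ p.2 ≤ ψ p.1})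
    (g : ℝ × ℝ) (hg : g ∈ P)
    (t : ℝ) (hp : (t, ψ t) ∈ P) (hgt : g.1 < t)
    (hblock : ∃ s ∈ openSegment ℝ g (t, ψ t), s.2 < φ s.1) :
    ∀ q ∈ P, t < q.1 → ¬ (g.1 ≤ q.1 ∧ segment ℝ g q ⊆ P) := by
  rintro q hq hqt ⟨-, hsub⟩
  obtain ⟨s, hs, hsf⟩ := hblock
  rw [openSegment] at hs
  obtain ⟨c, d, hc, hd, hcd, hseq⟩ := hs
  have hs1 : s.1 = c * g.1 + d * t := by
    rw [← hseq]; simp [Prod.smul_fst]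
  have hs2 : s.2 = c * g.2 + d * ψ t := by
    rw [← hseq]; simp [Prod.smul_snd]
  have hD : 0 < q.1 - g.1 := by linarith
  set v : ℝ := (s.1 - g.1) / (q.1 - g.1) with hv
  set w : ℝ := (t - g.1) / (q.1 - g.1) with hw
  have hvw : v = d * w := by
    rw [hv, hw, hs1]
    field_simp
    linear_combination g.1 * hcd
  have hw0 : 0 < w := div_pos (by linarith) hD
  have hw1 : w < 1 := by
    rw [hw, div_lt_one hD]; linarith
  have hv0 : 0 < v := by rw [hvw]; positivity
  have hv1 : v < 1 := by
    rw [hvw]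
    nlinarith [hw0, hw1, hd, hc]
  -- point r on segment g q with x-coordinate s.1
  have hr : (1 - v) • g + v • q ∈ segment ℝ g q :=
    ⟨1 - v, v, by linarith, by linarith, by ring, rfl⟩
  have hrP := hsub hr
  have hm : (1 - w) • g + w • q ∈ segment ℝ g q :=
    ⟨1 - w, w, by linarith, by linarith, by ring, rfl⟩
  have hmP := hsub hm
  rw [hP] at hrP hmP
  have hr1 : ((1 - v) • g + v • q).1 = s.1 := by
    simp only [Prod.fst_add, Prod.smul_fst, smul_eq_mul]
    rw [hv]; field_simp; ring
  have hr2 : ((1 - v) • g + v • q).2 = g.2 + v * (q.2 - g.2) := by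
    simp only [Prod.snd_add, Prod.smul_snd, smul_eq_mul]; ring
  have hm1 : ((1 - w) • g + w • q).1 = t := by
    simp only [Prod.fst_add, Prod.smul_fst, smul_eq_mul]
    rw [hw]; field_simp; ring
  have hm2 : ((1 - w) • g + w • q).2 = g.2 + w * (q.2 - g.2) := by
    simp only [Prod.snd_add, Prod.smul_snd, smul_eq_mul]; ring
  have h1 : φ s.1 ≤ g.2 + v * (q.2 - g.2) := by
    rw [← hr2, ← hr1]; exact hrP.2.1
  have h2 : g.2 + w * (q.2 - g.2) ≤ ψ t := by
    have := hmP.2.2; rw [hm1, hm2] at this; exact this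
  -- derive contradiction
  have key : d * (ψ t - g.2) < d * (w * (q.2 - g.2)) := by
    have h3 : c * g.2 + d * ψ t < g.2 + (d * w) * (q.2 - g.2) := by
      rw [← hvw, ← hs2]; linarith
    have hc' : c = 1 - d := by linarith
    rw [hc'] at h3
    nlinarith [h3]
  have : ψ t - g.2 < w * (q.2 - g.2) := lt_of_mul_lt_mul_left key (le_of_lt hd)
  linarith
end

section
/- Let P be an x-monotone simple polygon modeled as the region between a continuous floor function φ and ceiling function ψ over [a,b]. Let x and y be two points of P on a common vertical line with x strictly below y, and let q ∈ P with q.x strictly greater than their common x-coordinate. If the floor blocks y from seeing q (the segment yq contains a point strictly below the floor), then x does not see q (the segment xq also contains a point strictly below the floor). -/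
/-- If `x` and `y` are on a common vertical line with `x` strictly below `y`, `q` is
strictly to the right, and the floor blocks `y` from `q`, then the floor also blocks
`x` from `q`; in particular `x` does not see `q`. -/
theorem floor_blocks_below
    (a b : ℝ) (φ ψ : ℝ → ℝ)
    (hφ : ContinuousOn φ (Set.Icc a b)) (hψ : ContinuousOn ψ (Set.Icc a b))
    (hφψ : ∀ u ∈ Set.Icc a b, φ u ≤ ψ u)
    (P : Set (ℝ × ℝ))
    (hP : P = {p : ℝ × ℝ | p.1 ∈ Set.Icc a b ∧ φ p.1 ≤ p.2 ∧ p.2 ≤ ψ p.1})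
    (x y q : ℝ × ℝ) (hx : x ∈ P) (hy : y ∈ P) (hq : q ∈ P)
    (hline : x.1 = y.1) (hbelow : x.2 < y.2) (hright : x.1 < q.1)
    (hblock : ∃ s ∈ openSegment ℝ y q, s.2 < φ s.1) :
    ∃ s ∈ openSegment ℝ x q, s.2 < φ s.1 := by
  obtain ⟨s, ⟨t1, t2, ht1, ht2, hsum, hs⟩, hlt⟩ := hblock
  refine ⟨t1 • x + t2 • q, ⟨t1, t2, ht1, ht2, hsum, rfl⟩, ?_⟩
  have h1 : (t1 • x + t2 • q).1 = s.1 := by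
    subst hs; simp [Prod.smul_fst, hline]
  have h2 : (t1 • x + t2 • q).2 < s.2 := by
    subst hs; simp only [Prod.snd_add, Prod.smul_snd, smul_eq_mul]
    have := mul_lt_mul_of_pos_left hbelow ht1
    linarith
  rw [h1]; linarith
end

section
/- Let P be an x-monotone simple polygon modeled as the region between a continuous floor function φ and ceiling function ψ over [a,b]. Let x and y be two points of P on a common vertical line with x strictly above y, and let q ∈ P with q.x strictly greater than their common x-coordinate. If the ceiling blocks y from seeing q, then x does not see q. -/
/-- If `x` and `y` are on a common vertical line with `x` strictly above `y`, `q` is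
strictly to the right, and the ceiling blocks `y` from `q`, then the ceiling also
blocks `x` from `q`; in particular `x` does not see `q`. -/
theorem ceiling_blocks_above
    (a b : ℝ) (φ ψ : ℝ → ℝ)
    (hφ : ContinuousOn φ (Set.Icc a b)) (hψ : ContinuousOn ψ (Set.Icc a b))
    (hφψ : ∀ u ∈ Set.Icc a b, φ u ≤ ψ u)
    (P : Set (ℝ × ℝ))
    (hP : P = {p : ℝ × ℝ | p.1 ∈ Set.Icc a b ∧ φ p.1 ≤ p.2 ∧ p.2 ≤ ψ p.1})
    (x y q : ℝ × ℝ) (hx : x ∈ P) (hy : y ∈ P) (hq : q ∈ P)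
    (hline : x.1 = y.1) (habove : y.2 < x.2) (hright : x.1 < q.1)
    (hblock : ∃ s ∈ openSegment ℝ y q, ψ s.1 < s.2) :
    ∃ s ∈ openSegment ℝ x q, ψ s.1 < s.2 := by
  obtain ⟨s, ⟨t₁, t₂, ht₁, ht₂, hsum, hs⟩, hψs⟩ := hblock
  refine ⟨t₁ • x + t₂ • q, ⟨t₁, t₂, ht₁, ht₂, hsum, rfl⟩, ?_⟩
  have h1 : (t₁ • x + t₂ • q).1 = s.1 := by
    simp [← hs, Prod.smul_def, hline]
  rw [h1]
  have h2 : s.2 = t₁ * y.2 + t₂ * q.2 := by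
    simp [← hs, Prod.smul_def]
  have h3 : (t₁ • x + t₂ • q).2 = t₁ * x.2 + t₂ * q.2 := by
    simp [Prod.smul_def]
  rw [h3]
  nlinarith [hψs]
end

section
/- In an x-monotone simple polygon P (region between floor φ and ceiling ψ), half-guard visibility of any fixed point q from points to its left on a fixed vertical line is an interval: if points x, y, z lie on a common vertical line with x below y below z, x.x = y.x = z.x < q.x, and both x and z see q, then y sees q. -/
/-- On a fixed vertical line to the left of `q`, the set of points of `P` seeing `q`
is an interval: if `x` below `y` below `z` are on a common vertical line and both
`x` and `z` see `q`, then `y` sees `q`. -/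
theorem visibility_interval_on_vertical_line
    (a b : ℝ) (φ ψ : ℝ → ℝ)
    (hφ : ContinuousOn φ (Set.Icc a b)) (hψ : ContinuousOn ψ (Set.Icc a b))
    (hφψ : ∀ u ∈ Set.Icc a b, φ u ≤ ψ u)
    (P : Set (ℝ × ℝ))
    (hP : P = {p : ℝ × ℝ | p.1 ∈ Set.Icc a b ∧ φ p.1 ≤ p.2 ∧ p.2 ≤ ψ p.1})
    (x y z q : ℝ × ℝ) (hx : x ∈ P) (hy : y ∈ P) (hz : z ∈ P) (hq : q ∈ P)
    (hxy : x.1 = y.1) (hyz : y.1 = z.1)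
    (hxb : x.2 ≤ y.2) (hyb : y.2 ≤ z.2)
    (hright : x.1 < q.1)
    (hxsee : segment ℝ x q ⊆ P) (hzsee : segment ℝ z q ⊆ P) :
    y.1 ≤ q.1 ∧ segment ℝ y q ⊆ P := by
  constructor
  · linarith [hxy ▸ hright]
  · intro p hp
    obtain ⟨s, t, hs, ht, hst, rfl⟩ := hp
    have hxm : s • x + t • q ∈ P := hxsee ⟨s, t, hs, ht, hst, rfl⟩
    have hzm : s • z + t • q ∈ P := hzsee ⟨s, t, hs, ht, hst, rfl⟩
    rw [hP] at hxm hzm ⊢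
    obtain ⟨⟨hxa, hxb'⟩, hxlo, hxhi⟩ := hxm
    obtain ⟨⟨hza, hzb'⟩, hzlo, hzhi⟩ := hzm
    have h1 : (s • y + t • q).1 = (s • x + t • q).1 := by
      simp [Prod.fst_add, Prod.smul_fst, hxy]
    have h1' : (s • y + t • q).1 = (s • z + t • q).1 := by
      simp [Prod.fst_add, Prod.smul_fst, hyz]
    have h2x : (s • x + t • q).2 ≤ (s • y + t • q).2 := by
      simp only [Prod.snd_add, Prod.smul_snd, smul_eq_mul]
      nlinarith
    have h2z : (s • y + t • q).2 ≤ (s • z + t • q).2 := by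
      simp only [Prod.snd_add, Prod.smul_snd, smul_eq_mul]
      nlinarith
    refine ⟨⟨?_, ?_⟩, ?_, ?_⟩
    · rw [h1]; exact hxa
    · rw [h1]; exact hxb'
    · rw [h1]; exact le_trans hxlo h2x
    · rw [h1']; exact le_trans h2z hzhi
end

section
/- Let P be an x-monotone simple polygon between floor φ and ceiling ψ. If g ∈ P is blocked by the ceiling from seeing a floor point p with g.x < p.x (the segment gp contains a point strictly above the ceiling), then g sees no point of P with x-coordinate strictly greater than p.x. -/
/-- If the ceiling blocks `g` from a floor point `p = (t, φ t)` with `g.x < t`, then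
`g` sees no point of `P` strictly to the right of `p`. -/
theorem blocked_by_ceiling_sees_nothing_right
    (a b : ℝ) (φ ψ : ℝ → ℝ)
    (hφ : ContinuousOn φ (Set.Icc a b)) (hψ : ContinuousOn ψ (Set.Icc a b))
    (hφψ : ∀ x ∈ Set.Icc a b, φ x ≤ ψ x)
    (P : Set (ℝ × ℝ))
    (hP : P = {p : ℝ × ℝ | p.1 ∈ Set.Icc a b ∧ φ p.1 ≤ p.2 ∧ p.2 ≤ ψ p.1})
    (g : ℝ × ℝ) (hg : g ∈ P)
    (t : ℝ) (hp : (t, φ t) ∈ P) (hgt : g.1 < t)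
    (hblock : ∃ s ∈ openSegment ℝ g (t, φ t), ψ s.1 < s.2) :
    ∀ q ∈ P, t < q.1 → ¬ (g.1 ≤ q.1 ∧ segment ℝ g q ⊆ P) := by
  rintro q hq htq ⟨hgq, hseg⟩
  obtain ⟨s, hs, hψs⟩ := hblock
  rw [openSegment] at hs
  obtain ⟨α, β, hα, hβ, hαβ, rfl⟩ := hs
  have hgq1 : g.1 < q.1 := lt_trans hgt htq
  set ν := (t - g.1) / (q.1 - g.1) with hνdef
  have hνpos : 0 < ν := div_pos (by linarith) (by linarith)
  have hνlt : ν < 1 := (div_lt_one (by linarith)).2 (by linarith)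
  have hνq : ν * (q.1 - g.1) = t - g.1 := div_mul_cancel₀ _ (by linarith)
  have hβlt : β < 1 := by linarith
  -- the point r on segment g q with x-coordinate t
  have hr : (1 - ν) • g + ν • q ∈ segment ℝ g q :=
    ⟨1 - ν, ν, by linarith, hνpos.le, by ring, rfl⟩
  have hrP := hseg hr
  rw [hP] at hrP
  have hr1 : ((1 - ν) • g + ν • q).1 = t := by
    simp only [Prod.fst_add, Prod.smul_fst, smul_eq_mul]
    linear_combination hνq
  have hrφ : φ t ≤ (1 - ν) * g.2 + ν * q.2 := by
    have := hrP.2.1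
    rw [hr1] at this
    simpa [Prod.smul_snd, smul_eq_mul] using this
  -- the point s' on segment g q with the same x-coordinate as s
  have hmem : (1 - β * ν) • g + (β * ν) • q ∈ segment ℝ g q :=
    ⟨1 - β * ν, β * ν, by nlinarith, by positivity, by ring, rfl⟩
  have hs'P := hseg hmem
  rw [hP] at hs'P
  have hx : ((1 - β * ν) • g + (β * ν) • q).1 = (α • g + β • (t, φ t)).1 := by
    simp only [Prod.fst_add, Prod.smul_fst, smul_eq_mul]
    have h2 : β * ν * (q.1 - g.1) = β * (t - g.1) := by
      rw [mul_assoc, hνq]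
    linear_combination h2 - g.1 * hαβ
  have hψ' := hs'P.2.2
  rw [hx] at hψ'
  have hs2 : (α • g + β • (t, φ t)).2 = α * g.2 + β * φ t := by
    simp [Prod.smul_snd, smul_eq_mul]
  have hs'2 : ((1 - β * ν) • g + (β * ν) • q).2 = (1 - β * ν) * g.2 + β * ν * q.2 := by
    simp [Prod.smul_snd, smul_eq_mul]
  rw [hs'2] at hψ'
  rw [hs2] at hψs
  have key : β * φ t ≤ β * ((1 - ν) * g.2 + ν * q.2) :=
    mul_le_mul_of_nonneg_left hrφ hβ.le
  have hα' : α = 1 - β := by linarith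
  rw [hα'] at hψs hψ'
  nlinarith [key, hψ', hψs]
end
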